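/- Let (c, λ/μ) be a placed skew shape with n boxes. For ordered pairs (b, b′) of boxes of λ/μ with q^{2(c(b) − c(b′))} ≠ 1, set ã(b, b′) = (q − q^{−1})/(1 − q^{2(c(b) − c(b′))}), and assume q^{−2} − ã(b, b′)² ≠ 0 for all such pairs; fix a function s assigning to each such ordered pair a complex number s(b, b′) with s(b, b′)² = q^{−2} − ã(b, b′)². For T ∈ SYT(λ/μ) define D_T = ∏_{(i,j) ∈ inv(T)} (q^{−1} + ã(T(i), T(j)))/s(T(i), T(j)) and u_T = D_T v_T. Then for every T ∈ SYT(λ/μ) and every 1 ≤ i ≤ n−1 such that s_i(T) is standard and (i+1, i) ∉ inv(T), one has T_i u_T = ã_i(T) u_T + s(T(i), T(i+1)) u_{s_i(T)}, where s(T(i), T(i+1))² = q^{−2} − ã_i(T)². -/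

import Mathlib

open scoped Classical

noncomputable section

/-- A skew shape `λ/μ`: a pair of Young diagrams with `μ ⊆ λ`. -/
structure SkewShape where
  lam : YoungDiagram
  mu : YoungDiagram
  sub : mu ≤ lam

namespace SkewShape

/-- The boxes of the skew shape: boxes of `λ` not in `μ`. -/
def cells (sh : SkewShape) : Finset (ℕ × ℕ) := sh.lam.cells \ sh.mu.cells

/-- The number `n` of boxes of the skew shape. -/
def nb (sh : SkewShape) : ℕ := sh.cells.card

/-- `f` is a filling of the skew shape with `1, …, n`, each appearing exactly once
(normalized to be `0` off the shape). -/
def IsFilling (sh : SkewShape) (f : ℕ × ℕ → ℕ) : Prop :=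
  Set.BijOn f (↑sh.cells) (↑(Finset.Icc 1 sh.nb)) ∧ ∀ b, b ∉ sh.cells → f b = 0

/-- Entries increase from left to right along rows and from top to bottom down columns. -/
def IsRowColStrict (sh : SkewShape) (f : ℕ × ℕ → ℕ) : Prop :=
  (∀ x y : ℕ, (x, y) ∈ sh.cells → (x, y + 1) ∈ sh.cells → f (x, y) < f (x, y + 1)) ∧
  (∀ x y : ℕ, (x, y) ∈ sh.cells → (x + 1, y) ∈ sh.cells → f (x, y) < f (x + 1, y))

/-- The set of standard Young tableaux of shape `λ/μ`. -/
def SYT (sh : SkewShape) : Set ((ℕ × ℕ) → ℕ) := {f | sh.IsFilling f ∧ sh.IsRowColStrict f}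

/-- Standard Young tableaux of shape `λ/μ`, as a type. -/
def SYTt (sh : SkewShape) : Type := {f : (ℕ × ℕ) → ℕ // f ∈ sh.SYT}

/-- The box of the tableau `f` containing the entry `i`. -/
def boxOf (sh : SkewShape) (f : (ℕ × ℕ) → ℕ) (i : ℕ) : ℕ × ℕ :=
  Function.invFunOn f (↑sh.cells) i

end SkewShape

/-- The content `ct(b) = y - x` of a box `b = (x, y)` (row `x`, column `y`). -/
def ctZ (b : ℕ × ℕ) : ℤ := (b.2 : ℤ) - (b.1 : ℤ)

/-- Exchange the entries `i` and `i+1` in a filling. -/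
def sApply (i : ℕ) (f : (ℕ × ℕ) → ℕ) : (ℕ × ℕ) → ℕ := fun b => Equiv.swap i (i + 1) (f b)

/-- Column-reading order on boxes: by column (left to right), then by row (top to bottom). -/
def colLt (b b' : ℕ × ℕ) : Prop := b.2 < b'.2 ∨ (b.2 = b'.2 ∧ b.1 < b'.1)

namespace SkewShape

/-- The column reading tableau `C` of the skew shape: enter `1, …, n` consecutively down
the columns, filling the columns from left to right. -/
def colReading (sh : SkewShape) : (ℕ × ℕ) → ℕ :=
  fun b => if b ∈ sh.cells then 1 + (sh.cells.filter fun b' => colLt b' b).card else 0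

/-- The coefficient `a_{i,j}(T) = 1 / (ct(T(j)) - ct(T(i)))`. -/
def aIJ (sh : SkewShape) (f : (ℕ × ℕ) → ℕ) (i j : ℕ) : ℂ :=
  1 / ((ctZ (sh.boxOf f j) : ℂ) - (ctZ (sh.boxOf f i) : ℂ))

/-- The coefficient `a_i(T) = a_{i,i+1}(T)`. -/
def aI (sh : SkewShape) (f : (ℕ × ℕ) → ℕ) (i : ℕ) : ℂ := sh.aIJ f i (i + 1)

/-- The seminormal basis vector `v_f` (or `0` if `f` is not standard). -/
def vOf (sh : SkewShape) (f : (ℕ × ℕ) → ℕ) : sh.SYTt →₀ ℂ :=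
  if h : f ∈ sh.SYT then Finsupp.single ⟨f, h⟩ 1 else 0

/-- The seminormal operator of the simple transposition `s_i`:
`σ_i v_T = a_i(T) v_T + (1 + a_i(T)) v_{s_i(T)}`. -/
def semiOp (sh : SkewShape) (i : ℕ) : (sh.SYTt →₀ ℂ) →ₗ[ℂ] (sh.SYTt →₀ ℂ) :=
  Finsupp.lsum ℂ fun T : sh.SYTt =>
    LinearMap.toSpanSingleton ℂ _
      (sh.aI T.1 i • sh.vOf T.1 + (1 + sh.aI T.1 i) • sh.vOf (sApply i T.1))

/-- `opWord sh [i_1, …, i_k] = σ_{i_1} ∘ σ_{i_2} ∘ ⋯ ∘ σ_{i_k}`. -/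
def opWord (sh : SkewShape) : List ℕ → ((sh.SYTt →₀ ℂ) →ₗ[ℂ] (sh.SYTt →₀ ℂ))
  | [] => LinearMap.id
  | i :: is => semiOp sh i ∘ₗ opWord sh is

end SkewShape

/-- The permutation `s_{i_1} s_{i_2} ⋯ s_{i_k}` determined by a list of indices. -/
def wordProd (l : List ℕ) : Equiv.Perm ℕ := (l.map fun i => Equiv.swap i (i + 1)).prod

/-- The letters of the word index simple transpositions `s_1, …, s_{n-1}` of `S_n`. -/
def IsSnWord (n : ℕ) (l : List ℕ) : Prop := ∀ i ∈ l, 1 ≤ i ∧ i + 1 ≤ n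

/-- `l` is a reduced word for `w` in `S_n`. -/
def IsReducedWord (n : ℕ) (w : Equiv.Perm ℕ) (l : List ℕ) : Prop :=
  IsSnWord n l ∧ wordProd l = w ∧
    ∀ l' : List ℕ, IsSnWord n l' → wordProd l' = w → l.length ≤ l'.length

/-- The Coxeter length of `w` in `S_n`: the minimal number of simple transpositions
in a word for `w`. -/
def permLength (n : ℕ) (w : Equiv.Perm ℕ) : ℕ :=
  sInf {k | ∃ l : List ℕ, IsSnWord n l ∧ l.length = k ∧ wordProd l = w}

/-- Bruhat order on `S_n`: `σ ≤ τ` iff some reduced word for `τ` contains a subword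
that is a reduced word for `σ`. -/
def BruhatLE (n : ℕ) (σ τ : Equiv.Perm ℕ) : Prop :=
  ∃ lτ : List ℕ, IsReducedWord n τ lτ ∧ ∃ lσ : List ℕ, lσ.Sublist lτ ∧ IsReducedWord n σ lσ

namespace SkewShape

/-- `w` is the word `w_f` of the tableau `f`: `w(C) = f`, with `w` fixing everything
outside `{1, …, n}`. -/
def IsWordOf (sh : SkewShape) (f : (ℕ × ℕ) → ℕ) (w : Equiv.Perm ℕ) : Prop :=
  (∀ b ∈ sh.cells, w (sh.colReading b) = f b) ∧ ∀ m, m ∉ Finset.Icc 1 sh.nb → w m = m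

/-- Bruhat order on standard tableaux: `S ≤ T` iff `w_S ≤ w_T` in Bruhat order on `S_n`. -/
def tabLE (sh : SkewShape) (f g : (ℕ × ℕ) → ℕ) : Prop :=
  ∃ wf wg : Equiv.Perm ℕ, sh.IsWordOf f wf ∧ sh.IsWordOf g wg ∧ BruhatLE sh.nb wf wg

end SkewShape

/-- Apply the letters of a list, left to right, to a filling. -/
def applyWord : List ℕ → ((ℕ × ℕ) → ℕ) → ((ℕ × ℕ) → ℕ)
  | [], f => f
  | i :: is, f => applyWord is (sApply i f)

namespace SkewShape

/-- `(f, [i_1, …, i_k])` is a path `f →^{s_{i_1}} ⋯ →^{s_{i_k}}` in the weak Bruhat graph: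
every tableau along the way is standard. -/
def IsPath (sh : SkewShape) : ((ℕ × ℕ) → ℕ) → List ℕ → Prop
  | f, [] => f ∈ sh.SYT
  | f, i :: is => f ∈ sh.SYT ∧ sh.IsPath (sApply i f) is

/-- `(f, [i_1, …, i_k], [z_1, …, z_k])` is a subpath of the path starting at `f` with letters
`[i_1, …, i_k]`; at step `j` one moves by `s_{i_j}` if `z_j = true` and waits otherwise.
All intermediate tableaux must be standard. -/
def IsSubpath (sh : SkewShape) : ((ℕ × ℕ) → ℕ) → List ℕ → List Bool → Prop
  | f, [], [] => f ∈ sh.SYT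
  | f, i :: is, z :: zs => f ∈ sh.SYT ∧ sh.IsSubpath (if z then sApply i f else f) is zs
  | _, _, _ => False

end SkewShape

/-- The tableau at which a subpath terminates. -/
def subEnd : ((ℕ × ℕ) → ℕ) → List ℕ → List Bool → ((ℕ × ℕ) → ℕ)
  | f, [], _ => f
  | f, _ :: _, [] => f
  | f, i :: is, z :: zs => subEnd (if z then sApply i f else f) is zs

namespace SkewShape

/-- The `π`-weight of a subpath: the product of `a_{i_j}(S_{j-1})` over waiting steps and
`1 + a_{i_j}(S_{j-1})` over moving steps. -/
def subWeight (sh : SkewShape) : ((ℕ × ℕ) → ℕ) → List ℕ → List Bool → ℂ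
  | _, [], _ => 1
  | _, _ :: _, [] => 1
  | f, i :: is, z :: zs =>
      (if z then 1 + sh.aI f i else sh.aI f i) * sh.subWeight (if z then sApply i f else f) is zs

/-- The transition coefficient computed from a path: the sum of `π`-weights of all subpaths
of the path `(f₀, is)` terminating at `g`. -/
def pathCoeff (sh : SkewShape) (f₀ : (ℕ × ℕ) → ℕ) (is : List ℕ) (g : (ℕ × ℕ) → ℕ) : ℂ :=
  ∑ zs : Fin is.length → Bool,
    if sh.IsSubpath f₀ is (List.ofFn zs) ∧ subEnd f₀ is (List.ofFn zs) = g then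
      sh.subWeight f₀ is (List.ofFn zs)
    else 0

/-- The coefficient of `v_g` in `(σ_{i_1} ∘ ⋯ ∘ σ_{i_k})(v_C)` (or `0` if `g` is not
standard). -/
def natCoeff (sh : SkewShape) (l : List ℕ) (g : (ℕ × ℕ) → ℕ) : ℂ :=
  if h : g ∈ sh.SYT then (sh.opWord l (sh.vOf sh.colReading)) ⟨g, h⟩ else 0

end SkewShape

end

namespace SkewShape

/-- The set of inversions of a tableau: pairs `(i, j)` with `i > j` such that `i` lies
strictly south and strictly west of `j`. -/
noncomputable def invSet (sh : SkewShape) (f : (ℕ × ℕ) → ℕ) : Finset (ℕ × ℕ) :=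
  (Finset.Icc 1 sh.nb ×ˢ Finset.Icc 1 sh.nb).filter fun p =>
    p.2 < p.1 ∧ (sh.boxOf f p.2).1 < (sh.boxOf f p.1).1 ∧ (sh.boxOf f p.1).2 < (sh.boxOf f p.2).2

end SkewShape

noncomputable section

/-- A placed skew shape `(c, λ/μ)` for the affine Hecke algebra: a skew shape decomposed
into pages (pairwise disjoint skew shapes), each page `P` carrying a page number `β_P`,
with content function `c(b) = β_P + ct(b)` for a box `b` of the page `P`; the parameter
`q` is nonzero and not a root of unity, and the page numbers are chosen so that
`q^{2(c(b) - c(b'))} ≠ 1` whenever `b` and `b'` lie on different pages. -/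
structure PlacedSkewShape where
  sh : SkewShape
  q : ℂ
  hq0 : q ≠ 0
  hq_not_root_of_unity : ∀ k : ℕ, 0 < k → q ^ k ≠ 1
  page : ℕ × ℕ → ℕ
  beta : ℕ → ℂ
  pages_are_skew : ∀ p : ℕ, (∃ b ∈ sh.cells, page b = p) →
    ∃ shp : SkewShape, shp.cells = sh.cells.filter fun b => page b = p
  pages_separated : ∀ b ∈ sh.cells, ∀ b' ∈ sh.cells, page b ≠ page b' →
    q ^ ((2 : ℂ) * ((beta (page b) + ((b.2 : ℂ) - (b.1 : ℂ))) -
      (beta (page b') + ((b'.2 : ℂ) - (b'.1 : ℂ))))) ≠ 1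

namespace PlacedSkewShape

/-- The content function `c(b) = β_P + ct(b)` of the placed skew shape. -/
def c (P : PlacedSkewShape) (b : ℕ × ℕ) : ℂ :=
  P.beta (P.page b) + ((b.2 : ℂ) - (b.1 : ℂ))

/-- `(q - q⁻¹) / (1 - q^{2(c(b) - c(b'))})` for a pair of boxes. -/
def pairA (P : PlacedSkewShape) (b b' : ℕ × ℕ) : ℂ :=
  (P.q - P.q⁻¹) / (1 - P.q ^ ((2 : ℂ) * (P.c b - P.c b')))

/-- The coefficient `ã_{i,j}(T) = (q - q⁻¹) / (1 - q^{2(c(T(i)) - c(T(j)))})`. -/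
def aIJ (P : PlacedSkewShape) (f : (ℕ × ℕ) → ℕ) (i j : ℕ) : ℂ :=
  P.pairA (P.sh.boxOf f i) (P.sh.boxOf f j)

/-- The coefficient `ã_i(T) = ã_{i,i+1}(T)`. -/
def aI (P : PlacedSkewShape) (f : (ℕ × ℕ) → ℕ) (i : ℕ) : ℂ := P.aIJ f i (i + 1)

/-- The seminormal operator of the affine Hecke algebra generator `T_i`:
`T_i v_T = ã_i(T) v_T + (q⁻¹ + ã_i(T)) v_{s_i(T)}`. -/
def heckeOp (P : PlacedSkewShape) (i : ℕ) :
    (P.sh.SYTt →₀ ℂ) →ₗ[ℂ] (P.sh.SYTt →₀ ℂ) :=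
  Finsupp.lsum ℂ fun T : P.sh.SYTt =>
    LinearMap.toSpanSingleton ℂ _
      (P.aI T.1 i • P.sh.vOf T.1 + (P.q⁻¹ + P.aI T.1 i) • P.sh.vOf (sApply i T.1))

/-- `heckeWord P [i_1, …, i_k] = T_{i_1} ∘ T_{i_2} ∘ ⋯ ∘ T_{i_k}`. -/
def heckeWord (P : PlacedSkewShape) : List ℕ → ((P.sh.SYTt →₀ ℂ) →ₗ[ℂ] (P.sh.SYTt →₀ ℂ))
  | [] => LinearMap.id
  | i :: is => P.heckeOp i ∘ₗ P.heckeWord is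

/-- The `q`-weight of a subpath: the product of `ã_{i_j}(S_{j-1})` over waiting steps and
`q⁻¹ + ã_{i_j}(S_{j-1})` over moving steps. -/
def subWeight (P : PlacedSkewShape) : ((ℕ × ℕ) → ℕ) → List ℕ → List Bool → ℂ
  | _, [], _ => 1
  | _, _ :: _, [] => 1
  | f, i :: is, z :: zs =>
      (if z then P.q⁻¹ + P.aI f i else P.aI f i) *
        P.subWeight (if z then sApply i f else f) is zs

/-- The transition coefficient `Ã_{S,T}` computed from a path: the sum of `q`-weights of
all subpaths of the path `(f₀, is)` terminating at `g`. -/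
def pathCoeff (P : PlacedSkewShape) (f₀ : (ℕ × ℕ) → ℕ) (is : List ℕ)
    (g : (ℕ × ℕ) → ℕ) : ℂ :=
  ∑ zs : Fin is.length → Bool,
    if P.sh.IsSubpath f₀ is (List.ofFn zs) ∧ subEnd f₀ is (List.ofFn zs) = g then
      P.subWeight f₀ is (List.ofFn zs)
    else 0

/-- The coefficient of `v_g` in `(T_{i_1} ∘ ⋯ ∘ T_{i_k})(v_C)` (or `0` if `g` is not
standard). -/
def natCoeff (P : PlacedSkewShape) (l : List ℕ) (g : (ℕ × ℕ) → ℕ) : ℂ :=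
  if h : g ∈ P.sh.SYT then (P.heckeWord l (P.sh.vOf P.sh.colReading)) ⟨g, h⟩ else 0

end PlacedSkewShape

end

/-! ### Auxiliary lemmas -/

namespace SkewShape

lemma mem_cells_iff' (sh : SkewShape) (b : ℕ × ℕ) :
    b ∈ sh.cells ↔ b ∈ sh.lam ∧ b ∉ sh.mu := by
  simp [cells, Finset.mem_sdiff, YoungDiagram.mem_cells]

lemma cell_of_rect (sh : SkewShape) {r c r' c' : ℕ} (h1 : (r, c) ∈ sh.cells)
    (h2 : (r', c') ∈ sh.cells) (hr : r ≤ r') (hc : c ≤ c') : (r, c') ∈ sh.cells := by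
  rw [mem_cells_iff'] at *
  exact ⟨sh.lam.up_left_mem hr le_rfl h2.1, fun hm => h1.2 (sh.mu.up_left_mem le_rfl hc hm)⟩

lemma chain_row (sh : SkewShape) {f} (hf : f ∈ sh.SYT) {x y : ℕ} (d : ℕ)
    (h1 : (x, y) ∈ sh.cells) (h2 : (x, y + d) ∈ sh.cells) : f (x, y) + d ≤ f (x, y + d) := by
  induction d with
  | zero => simp
  | succ d ih =>
    have hmid : (x, y + d) ∈ sh.cells := by
      rw [mem_cells_iff'] at *
      exact ⟨sh.lam.up_left_mem le_rfl (by omega) h2.1,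
        fun hm => h1.2 (sh.mu.up_left_mem le_rfl (by omega) hm)⟩
    have hstep := hf.2.1 x (y + d) hmid h2
    have := ih hmid
    show f (x, y) + (d + 1) ≤ f (x, y + d + 1)
    omega

lemma chain_col (sh : SkewShape) {f} (hf : f ∈ sh.SYT) {x y : ℕ} (d : ℕ)
    (h1 : (x, y) ∈ sh.cells) (h2 : (x + d, y) ∈ sh.cells) : f (x, y) + d ≤ f (x + d, y) := by
  induction d with
  | zero => simp
  | succ d ih =>
    have hmid : (x + d, y) ∈ sh.cells := by
      rw [mem_cells_iff'] at *
      exact ⟨sh.lam.up_left_mem (by omega) le_rfl h2.1,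
        fun hm => h1.2 (sh.mu.up_left_mem (by omega) le_rfl hm)⟩
    have hstep := hf.2.2 (x + d) y hmid h2
    have := ih hmid
    show f (x, y) + (d + 1) ≤ f (x + d + 1, y)
    omega

lemma rect_le (sh : SkewShape) {f} (hf : f ∈ sh.SYT) {r c r' c' : ℕ}
    (h1 : (r, c) ∈ sh.cells) (h2 : (r', c') ∈ sh.cells) (hr : r ≤ r') (hc : c ≤ c') :
    f (r, c) + (c' - c) + (r' - r) ≤ f (r', c') := by
  obtain ⟨e, rfl⟩ := Nat.exists_eq_add_of_le hr
  obtain ⟨d, rfl⟩ := Nat.exists_eq_add_of_le hc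
  have hcorner := sh.cell_of_rect h1 h2 (Nat.le_add_right r e) (Nat.le_add_right c d)
  have hrow := sh.chain_row hf d h1 hcorner
  have hcol := sh.chain_col hf e hcorner h2
  omega

lemma boxOf_mem (sh : SkewShape) {f} (hf : sh.IsFilling f) {j : ℕ}
    (hj : j ∈ Finset.Icc 1 sh.nb) : sh.boxOf f j ∈ sh.cells :=
  Function.invFunOn_mem (hf.1.surjOn (Finset.mem_coe.mpr hj))

lemma apply_boxOf (sh : SkewShape) {f} (hf : sh.IsFilling f) {j : ℕ}
    (hj : j ∈ Finset.Icc 1 sh.nb) : f (sh.boxOf f j) = j :=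
  Function.invFunOn_eq (hf.1.surjOn (Finset.mem_coe.mpr hj))

lemma boxOf_apply (sh : SkewShape) {f} (hf : sh.IsFilling f) {b : ℕ × ℕ}
    (hb : b ∈ sh.cells) : sh.boxOf f (f b) = b :=
  hf.1.injOn (sh.boxOf_mem hf (Finset.mem_coe.mp (hf.1.mapsTo hb))) hb
    (Function.invFunOn_apply_eq hb)

end SkewShape

lemma swap_mem_Icc {n i j : ℕ} (hi1 : 1 ≤ i) (hin : i + 1 ≤ n) (hj : j ∈ Finset.Icc 1 n) :
    Equiv.swap i (i + 1) j ∈ Finset.Icc 1 n := by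
  simp only [Finset.mem_Icc] at *
  rcases eq_or_ne j i with rfl | h1
  · rw [Equiv.swap_apply_left]; omega
  rcases eq_or_ne j (i + 1) with rfl | h2
  · rw [Equiv.swap_apply_right]; omega
  · rw [Equiv.swap_apply_of_ne_of_ne h1 h2]; omega

lemma swap_lt {i a b : ℕ} (h1 : ¬(a = i ∧ b = i + 1)) (h2 : ¬(a = i + 1 ∧ b = i))
    (h : b < a) : Equiv.swap i (i + 1) b < Equiv.swap i (i + 1) a := by
  simp only [Equiv.swap_apply_def]
  split_ifs <;> omega

namespace SkewShape

lemma boxOf_sApply (sh : SkewShape) {f} {i : ℕ} (hf : sh.IsFilling f)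
    (hg : sh.IsFilling (sApply i f)) (hi1 : 1 ≤ i) (hin : i + 1 ≤ sh.nb)
    {j : ℕ} (hj : j ∈ Finset.Icc 1 sh.nb) :
    sh.boxOf (sApply i f) j = sh.boxOf f (Equiv.swap i (i + 1) j) := by
  have hj' := swap_mem_Icc hi1 hin hj
  have hb : sh.boxOf f (Equiv.swap i (i + 1) j) ∈ sh.cells := sh.boxOf_mem hf hj'
  have hval : sApply i f (sh.boxOf f (Equiv.swap i (i + 1) j)) = j := by
    unfold sApply
    rw [sh.apply_boxOf hf hj', Equiv.swap_apply_self]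
  calc sh.boxOf (sApply i f) j
      = sh.boxOf (sApply i f) (sApply i f (sh.boxOf f (Equiv.swap i (i + 1) j))) := by
        rw [hval]
    _ = _ := sh.boxOf_apply hg hb

end SkewShape

namespace SkewShape

lemma chain_row' (sh : SkewShape) {f} (hf : f ∈ sh.SYT) {x y y' : ℕ} (hy : y ≤ y')
    (h1 : (x, y) ∈ sh.cells) (h2 : (x, y') ∈ sh.cells) : f (x, y) + (y' - y) ≤ f (x, y') := by
  have := sh.chain_row hf (y' - y) h1 (by rwa [Nat.add_sub_cancel' hy])
  rwa [Nat.add_sub_cancel' hy] at this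

lemma chain_col' (sh : SkewShape) {f} (hf : f ∈ sh.SYT) {x x' y : ℕ} (hx : x ≤ x')
    (h1 : (x, y) ∈ sh.cells) (h2 : (x', y) ∈ sh.cells) : f (x, y) + (x' - x) ≤ f (x', y) := by
  have := sh.chain_col hf (x' - x) h1 (by rwa [Nat.add_sub_cancel' hx])
  rwa [Nat.add_sub_cancel' hx] at this

end SkewShape

namespace SkewShape

lemma box_geom (sh : SkewShape) {f : (ℕ × ℕ) → ℕ} {i : ℕ} (hT : f ∈ sh.SYT)
    (hstd : sApply i f ∈ sh.SYT) (hi1 : 1 ≤ i) (hin : i + 1 ≤ sh.nb)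
    (hninv : (i + 1, i) ∉ sh.invSet f) :
    (sh.boxOf f (i + 1)).1 < (sh.boxOf f i).1 ∧ (sh.boxOf f i).2 < (sh.boxOf f (i + 1)).2 := by
  have hiI : i ∈ Finset.Icc 1 sh.nb := by simp only [Finset.mem_Icc]; omega
  have hi1I : i + 1 ∈ Finset.Icc 1 sh.nb := by simp only [Finset.mem_Icc]; omega
  have hb : sh.boxOf f i ∈ sh.cells := sh.boxOf_mem hT.1 hiI
  have hb' : sh.boxOf f (i + 1) ∈ sh.cells := sh.boxOf_mem hT.1 hi1I
  have hfb : f (sh.boxOf f i) = i := sh.apply_boxOf hT.1 hiI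
  have hfb' : f (sh.boxOf f (i + 1)) = i + 1 := sh.apply_boxOf hT.1 hi1I
  rcases hbeq : sh.boxOf f i with ⟨r, c⟩
  rcases hb'eq : sh.boxOf f (i + 1) with ⟨r', c'⟩
  rw [hbeq] at hb hfb
  rw [hb'eq] at hb' hfb'
  have hninv' : ¬(r < r' ∧ c' < c) := by
    rintro ⟨h1, h2⟩
    refine hninv ?_
    simp only [invSet, Finset.mem_filter, Finset.mem_product, hbeq, hb'eq]
    exact ⟨⟨hi1I, hiI⟩, by omega, h1, h2⟩
  show r' < r ∧ c < c'
  rcases lt_trichotomy r r' with h | h | h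
  · exfalso
    rcases lt_trichotomy c c' with hc | hc | hc
    · have := sh.rect_le hT hb hb' h.le hc.le
      omega
    · -- same column, r' = r + 1 forced, contradiction with hstd
      subst hc
      have := sh.chain_col' hT h.le hb hb'
      have hr1 : r' = r + 1 := by omega
      subst hr1
      have hcon := hstd.2.2 r c hb hb'
      unfold sApply at hcon
      rw [hfb, hfb', Equiv.swap_apply_left, Equiv.swap_apply_right] at hcon
      omega
    · exact hninv' ⟨h, hc⟩
  · exfalso
    subst h
    rcases lt_trichotomy c c' with hc | hc | hc
    · have := sh.chain_row' hT hc.le hb hb'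
      have hc1 : c' = c + 1 := by omega
      subst hc1
      have hcon := hstd.2.1 r c hb hb'
      unfold sApply at hcon
      rw [hfb, hfb', Equiv.swap_apply_left, Equiv.swap_apply_right] at hcon
      omega
    · subst hc; omega
    · have := sh.chain_row' hT hc.le hb' hb
      omega
  · rcases lt_trichotomy c c' with hc | hc | hc
    · exact ⟨h, hc⟩
    · exfalso; subst hc
      have := sh.chain_col' hT h.le hb' hb
      omega
    · exfalso
      have := sh.rect_le hT hb' hb h.le hc.le
      omega

end SkewShape

namespace SkewShape

lemma invSet_sApply (sh : SkewShape) {f : (ℕ × ℕ) → ℕ} {i : ℕ} (hT : f ∈ sh.SYT)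
    (hstd : sApply i f ∈ sh.SYT) (hi1 : 1 ≤ i) (hin : i + 1 ≤ sh.nb)
    (hninv : (i + 1, i) ∉ sh.invSet f) :
    sh.invSet (sApply i f) = insert (i + 1, i)
      ((sh.invSet f).image fun p => (Equiv.swap i (i + 1) p.1, Equiv.swap i (i + 1) p.2)) := by
  obtain ⟨hrow, hcol⟩ := sh.box_geom hT hstd hi1 hin hninv
  have hiI : i ∈ Finset.Icc 1 sh.nb := by simp only [Finset.mem_Icc]; omega
  have hi1I : i + 1 ∈ Finset.Icc 1 sh.nb := by simp only [Finset.mem_Icc]; omega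
  have hbox : ∀ j ∈ Finset.Icc 1 sh.nb,
      sh.boxOf (sApply i f) j = sh.boxOf f (Equiv.swap i (i + 1) j) :=
    fun j hj => sh.boxOf_sApply hT.1 hstd.1 hi1 hin hj
  ext ⟨j, k⟩
  simp only [invSet, Finset.mem_insert, Finset.mem_image, Finset.mem_filter,
    Finset.mem_product, Prod.mk.injEq]
  constructor
  · rintro ⟨⟨hj, hk⟩, hlt, hr, hc⟩
    by_cases hcase : j = i + 1 ∧ k = i
    · exact Or.inl ⟨hcase.1, hcase.2⟩
    · refine Or.inr ⟨(Equiv.swap i (i + 1) j, Equiv.swap i (i + 1) k),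
        ⟨⟨swap_mem_Icc hi1 hin hj, swap_mem_Icc hi1 hin hk⟩, ?_, ?_, ?_⟩, ?_, ?_⟩
      · exact swap_lt (by intro h; omega) hcase hlt
      · rw [← hbox j hj, ← hbox k hk]; exact hr
      · rw [← hbox j hj, ← hbox k hk]; exact hc
      · exact Equiv.swap_apply_self _ _ j
      · exact Equiv.swap_apply_self _ _ k
  · rintro (⟨heqj, heqk⟩ | ⟨⟨a, b⟩, ⟨⟨ha, hb⟩, hab, hr, hc⟩, heq1, heq2⟩)
    · rw [heqj, heqk]
      refine ⟨⟨hi1I, hiI⟩, by omega, ?_, ?_⟩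
      · rw [hbox i hiI, hbox (i + 1) hi1I, Equiv.swap_apply_left, Equiv.swap_apply_right]
        exact hrow
      · rw [hbox i hiI, hbox (i + 1) hi1I, Equiv.swap_apply_left, Equiv.swap_apply_right]
        exact hcol
    · subst heq1; subst heq2
      dsimp only at ha hb hab hr hc ⊢
      have hne : ¬(a = i + 1 ∧ b = i) := by
        intro h; rw [h.1, h.2] at hr; omega
      have haI := swap_mem_Icc hi1 hin ha
      have hbI := swap_mem_Icc hi1 hin hb
      refine ⟨⟨haI, hbI⟩, ?_, ?_, ?_⟩
      · exact swap_lt (by intro h; omega) hne hab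
      · rw [hbox _ haI, hbox _ hbI, Equiv.swap_apply_self, Equiv.swap_apply_self]
        exact hr
      · rw [hbox _ haI, hbox _ hbI, Equiv.swap_apply_self, Equiv.swap_apply_self]
        exact hc

end SkewShape

/-- **Theorem (orthogonal-type basis, affine Hecke algebra).**
Fix a square-root function `s` on ordered pairs of boxes with
`s(b,b')² = q⁻² - ã(b,b')²` whenever `q^{2(c(b)-c(b'))} ≠ 1`, assuming
`q⁻² - ã(b,b')² ≠ 0` for all such pairs.  With
`D_T = ∏_{(i,j) ∈ inv(T)} (q⁻¹ + ã(T(i),T(j))) / s(T(i),T(j))` and `u_T = D_T v_T`,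
for every `T ∈ SYT(λ/μ)` and `1 ≤ i ≤ n-1` such that `s_i(T)` is standard and
`(i+1, i) ∉ inv(T)`, one has
`T_i u_T = ã_i(T) u_T + s(T(i),T(i+1)) u_{s_i(T)}`, where
`s(T(i),T(i+1))² = q⁻² - ã_i(T)²`. -/
theorem hecke_orthogonal_basis_action
    (P : PlacedSkewShape) (s : (ℕ × ℕ) → (ℕ × ℕ) → ℂ)
    (hne : ∀ b ∈ P.sh.cells, ∀ b' ∈ P.sh.cells,
        P.q ^ ((2 : ℂ) * (P.c b - P.c b')) ≠ 1 →
        P.q⁻¹ ^ 2 - (P.pairA b b') ^ 2 ≠ 0)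
    (hs : ∀ b ∈ P.sh.cells, ∀ b' ∈ P.sh.cells,
        P.q ^ ((2 : ℂ) * (P.c b - P.c b')) ≠ 1 →
        (s b b') ^ 2 = P.q⁻¹ ^ 2 - (P.pairA b b') ^ 2)
    (D : ((ℕ × ℕ) → ℕ) → ℂ)
    (hD : ∀ f, D f = ∏ p ∈ P.sh.invSet f,
        (P.q⁻¹ + P.pairA (P.sh.boxOf f p.1) (P.sh.boxOf f p.2)) /
          s (P.sh.boxOf f p.1) (P.sh.boxOf f p.2))
    (u : ((ℕ × ℕ) → ℕ) → (P.sh.SYTt →₀ ℂ))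
    (hu : ∀ f, u f = D f • P.sh.vOf f)
    (T : (ℕ × ℕ) → ℕ) (hT : T ∈ P.sh.SYT)
    (i : ℕ) (hi1 : 1 ≤ i) (hin : i + 1 ≤ P.sh.nb)
    (hstd : sApply i T ∈ P.sh.SYT) (hninv : (i + 1, i) ∉ P.sh.invSet T) :
    P.heckeOp i (u T) =
        P.aI T i • u T + s (P.sh.boxOf T i) (P.sh.boxOf T (i + 1)) • u (sApply i T) ∧
      (s (P.sh.boxOf T i) (P.sh.boxOf T (i + 1))) ^ 2 = P.q⁻¹ ^ 2 - (P.aI T i) ^ 2 := by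
  have hiI : i ∈ Finset.Icc 1 P.sh.nb := by simp only [Finset.mem_Icc]; omega
  have hi1I : i + 1 ∈ Finset.Icc 1 P.sh.nb := by simp only [Finset.mem_Icc]; omega
  have hb : P.sh.boxOf T i ∈ P.sh.cells := P.sh.boxOf_mem hT.1 hiI
  have hb' : P.sh.boxOf T (i + 1) ∈ P.sh.cells := P.sh.boxOf_mem hT.1 hi1I
  obtain ⟨hrow, hcol⟩ := P.sh.box_geom hT hstd hi1 hin hninv
  -- the relevant power of q is not 1
  have hq1 : P.q ^ ((2 : ℂ) * (P.c (P.sh.boxOf T i) - P.c (P.sh.boxOf T (i + 1)))) ≠ 1 := by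
    set b := P.sh.boxOf T i
    set b' := P.sh.boxOf T (i + 1)
    by_cases hpage : P.page b = P.page b'
    · have hz : (2 : ℂ) * (P.c b - P.c b') = ((2 * (ctZ b - ctZ b') : ℤ) : ℂ) := by
        unfold PlacedSkewShape.c ctZ
        rw [hpage]
        push_cast
        ring
      rw [hz, Complex.cpow_intCast]
      intro hone
      have hzlt : 2 * (ctZ b - ctZ b') ≤ -4 := by unfold ctZ; omega
      have h3 : P.q ^ (-(2 * (ctZ b - ctZ b'))) = 1 := by rw [zpow_neg, hone, inv_one]
      have h4 : P.q ^ ((-(2 * (ctZ b - ctZ b'))).toNat) = 1 := by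
        rw [← zpow_natCast, Int.toNat_of_nonneg (by omega)]
        exact h3
      exact P.hq_not_root_of_unity _ (by omega) h4
    · exact P.pages_separated b hb b' hb' hpage
  have hsq := hs _ hb _ hb' hq1
  have hsne : s (P.sh.boxOf T i) (P.sh.boxOf T (i + 1)) ≠ 0 := by
    intro h0
    rw [h0] at hsq
    exact hne _ hb _ hb' hq1 (by rw [← hsq]; ring)
  -- relate boxOf for `sApply i T` and `T`
  have hbox : ∀ j ∈ Finset.Icc 1 P.sh.nb,
      P.sh.boxOf (sApply i T) j = P.sh.boxOf T (Equiv.swap i (i + 1) j) :=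
    fun j hj => P.sh.boxOf_sApply hT.1 hstd.1 hi1 hin hj
  have hgb : P.sh.boxOf (sApply i T) (i + 1) = P.sh.boxOf T i := by
    rw [hbox (i + 1) hi1I, Equiv.swap_apply_right]
  have hgb' : P.sh.boxOf (sApply i T) i = P.sh.boxOf T (i + 1) := by
    rw [hbox i hiI, Equiv.swap_apply_left]
  -- the product identity D_{s_i T} = ((q⁻¹ + ã)/s) * D_T
  have hnotmem : (i + 1, i) ∉ (P.sh.invSet T).image
      (fun p => (Equiv.swap i (i + 1) p.1, Equiv.swap i (i + 1) p.2)) := by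
    intro hmem
    obtain ⟨p, hp, heq⟩ := Finset.mem_image.mp hmem
    have h1 : Equiv.swap i (i + 1) p.1 = i + 1 := congrArg Prod.fst heq
    have h2 : Equiv.swap i (i + 1) p.2 = i := congrArg Prod.snd heq
    have h1' : p.1 = i := by
      have := congrArg (Equiv.swap i (i + 1)) h1
      rwa [Equiv.swap_apply_self, Equiv.swap_apply_right] at this
    have h2' : p.2 = i + 1 := by
      have := congrArg (Equiv.swap i (i + 1)) h2
      rwa [Equiv.swap_apply_self, Equiv.swap_apply_left] at this
    have := (Finset.mem_filter.mp hp).2.1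
    omega
  have hinj : ∀ p ∈ P.sh.invSet T, ∀ p' ∈ P.sh.invSet T,
      (fun p => (Equiv.swap i (i + 1) p.1, Equiv.swap i (i + 1) p.2)) p =
        (fun p => (Equiv.swap i (i + 1) p.1, Equiv.swap i (i + 1) p.2)) p' → p = p' := by
    intro p _ p' _ h
    have h1 := congrArg Prod.fst h
    have h2 := congrArg Prod.snd h
    dsimp only at h1 h2
    exact Prod.ext ((Equiv.swap i (i + 1)).injective h1)
      ((Equiv.swap i (i + 1)).injective h2)
  have hDg : D (sApply i T) =
      ((P.q⁻¹ + P.pairA (P.sh.boxOf T i) (P.sh.boxOf T (i + 1))) /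
        s (P.sh.boxOf T i) (P.sh.boxOf T (i + 1))) * D T := by
    rw [hD (sApply i T), hD T, P.sh.invSet_sApply hT hstd hi1 hin hninv,
      Finset.prod_insert hnotmem, Finset.prod_image hinj]
    congr 1
    · dsimp only
      rw [hgb, hgb']
    · refine Finset.prod_congr rfl fun p hp => ?_
      have hpm := Finset.mem_product.mp (Finset.mem_filter.mp hp).1
      dsimp only
      rw [hbox _ (swap_mem_Icc hi1 hin hpm.1), hbox _ (swap_mem_Icc hi1 hin hpm.2),
        Equiv.swap_apply_self, Equiv.swap_apply_self]
  have key : D T * (P.q⁻¹ + P.aI T i) =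
      s (P.sh.boxOf T i) (P.sh.boxOf T (i + 1)) * D (sApply i T) := by
    have haI : P.aI T i = P.pairA (P.sh.boxOf T i) (P.sh.boxOf T (i + 1)) := rfl
    rw [hDg, haI]
    field_simp
  have hvT : P.sh.vOf T = Finsupp.single (⟨T, hT⟩ : P.sh.SYTt) 1 := by
    unfold SkewShape.vOf
    rw [dif_pos hT]
    rfl
  have hop : P.heckeOp i (P.sh.vOf T) =
      P.aI T i • P.sh.vOf T + (P.q⁻¹ + P.aI T i) • P.sh.vOf (sApply i T) := by
    rw [hvT]
    unfold PlacedSkewShape.heckeOp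
    erw [Finsupp.lsum_single]
    rw [LinearMap.toSpanSingleton_apply, one_smul, ← hvT]
  refine ⟨?_, hs _ hb _ hb' hq1⟩
  rw [hu T, hu (sApply i T), map_smul, hop, smul_add, smul_smul, smul_smul, smul_smul,
    smul_smul, mul_comm (D T) (P.aI T i), key]
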